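/- Under the same discounted POMDP setup with bounded measurable cost, if γ_{P_n}* is an optimal policy designed for the (incorrect) prior P_n, then the loss from applying it to the true prior P satisfies |J_β(P,Q,γ_{P_n}*) − J_β*(P,Q)| ≤ 2 ‖P_n − P‖_TV · ‖c‖_∞ / (1 − β). -/

import Mathlib

open MeasureTheory ProbabilityTheory Filter

namespace Stmt17

variable {X Y U : Type*} [MeasurableSpace X] [MeasurableSpace Y] [MeasurableSpace U]

/-- Total variation distance (factor-2 convention). -/
noncomputable def tvDist {α : Type*} [MeasurableSpace α] (μ ν : Measure α) : ℝ :=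
  2 * ⨆ B : {B : Set α // MeasurableSet B}, |(μ B.1).toReal - (ν B.1).toReal|

/-- The joint law of `(X_t, Y_0, …, Y_t)` for the partially observed controlled Markov
chain with prior `P`, transition kernel `T`, observation channel `Q`, under a (deterministic,
observation-feedback) policy `γ = (γ_t)` with `U_t = γ_t(Y_0,…,Y_t)`. -/
noncomputable def hist (T : Kernel (X × U) X) (Q : Kernel X Y)
    (γ : (t : ℕ) → (Fin (t + 1) → Y) → U) :
    (t : ℕ) → Measure X → Measure (X × (Fin (t + 1) → Y))
  | 0, P => (P ⊗ₘ Q).map (fun p => (p.1, fun _ => p.2))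
  | (t + 1), P => (hist T Q γ t P).bind
      (fun p => ((T (p.1, γ t p.2)) ⊗ₘ Q).map (fun q => (q.1, Fin.snoc p.2 q.2)))

/-- Admissible policies: at each time `t`, a measurable function of the observations
`Y_0, …, Y_t`. -/
def Pol (Y U : Type*) [MeasurableSpace Y] [MeasurableSpace U] : Type _ :=
  {γ : (t : ℕ) → (Fin (t + 1) → Y) → U // ∀ t, Measurable (γ t)}

/-- The infinite-horizon discounted cost `J_β(P,T,γ) = E_P^γ[Σ_t β^t c(X_t,U_t)]`. -/
noncomputable def Jbeta (β : ℝ) (c : X → U → ℝ) (T : Kernel (X × U) X) (Q : Kernel X Y)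
    (P : Measure X) (γ : (t : ℕ) → (Fin (t + 1) → Y) → U) : ℝ :=
  ∑' t : ℕ, β ^ t * ∫ p, c p.1 (γ t p.2) ∂(hist T Q γ t P)

/-- The optimal discounted cost `J_β*(P,T)`. -/
noncomputable def Jstar (β : ℝ) (c : X → U → ℝ) (T : Kernel (X × U) X) (Q : Kernel X Y)
    (P : Measure X) : ℝ :=
  ⨅ γ : Pol Y U, Jbeta β c T Q P γ.1

/-! Total variation contracts under Markov kernels, so under a fixed policy the laws of
`(X_t, Y_0, …, Y_t)` started from `P` and from `P_n` stay within `‖P_n − P‖_TV` of each other.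
A cost bounded by `M` therefore moves each stage cost by at most `M ‖P_n − P‖_TV`, and
discounting sums these to `M ‖P_n − P‖_TV / (1 − β)`. The same bound passes to the infima over
policies, and the triangle inequality through `J_β(P_n, γ_n) = J_β*(P_n)` gives the factor 2. -/
section TotalVariation

variable {α β : Type*} [MeasurableSpace α] [MeasurableSpace β] {μ ν : Measure α}

lemma tvDist_comm (μ ν : Measure α) : tvDist μ ν = tvDist ν μ := by
  simp only [tvDist, abs_sub_comm]

lemma bddAbove_abs_measure_sub [IsProbabilityMeasure μ] [IsProbabilityMeasure ν] :
    BddAbove (Set.range fun B : {B : Set α // MeasurableSet B} =>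
      |(μ B.1).toReal - (ν B.1).toReal|) :=
  ⟨1, by
    rintro _ ⟨B, rfl⟩
    exact abs_sub_le_of_nonneg_of_le ENNReal.toReal_nonneg measureReal_le_one
      ENNReal.toReal_nonneg measureReal_le_one⟩

lemma two_mul_abs_measure_sub_le_tvDist [IsProbabilityMeasure μ] [IsProbabilityMeasure ν]
    {B : Set α} (hB : MeasurableSet B) :
    2 * |(μ B).toReal - (ν B).toReal| ≤ tvDist μ ν :=
  mul_le_mul_of_nonneg_left (le_ciSup bddAbove_abs_measure_sub ⟨B, hB⟩) zero_le_two

lemma tvDist_le_of_forall {C : ℝ}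
    (h : ∀ B, MeasurableSet B → 2 * |(μ B).toReal - (ν B).toReal| ≤ C) : tvDist μ ν ≤ C := by
  have : Nonempty {B : Set α // MeasurableSet B} := ⟨⟨∅, .empty⟩⟩
  rw [tvDist, ← le_div_iff₀' zero_lt_two]
  exact ciSup_le fun B => (le_div_iff₀' zero_lt_two).2 (h B.1 B.2)

lemma integral_eq_setIntegral_Ioc_measure_lt [IsFiniteMeasure μ] {g : α → ℝ} (hg : Measurable g)
    {M : ℝ} (hg0 : ∀ x, 0 ≤ g x) (hgM : ∀ x, g x ≤ M) :
    ∫ x, g x ∂μ = ∫ s in Set.Ioc 0 M, (μ {x | s < g x}).toReal := by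
  have hint : Integrable g μ :=
    (integrable_const M).mono' hg.aestronglyMeasurable
      (.of_forall fun x => by rw [Real.norm_eq_abs, abs_of_nonneg (hg0 x)]; exact hgM x)
  rw [hint.integral_eq_integral_meas_lt (.of_forall hg0)]
  refine setIntegral_eq_of_subset_of_forall_sdiff_eq_zero measurableSet_Ioi
    Set.Ioc_subset_Ioi_self fun s hs => ?_
  have hMs : M < s := lt_of_not_ge fun hsM => hs.2 ⟨hs.1, hsM⟩
  have hempty : {x | s < g x} = ∅ :=
    Set.eq_empty_of_forall_notMem fun x hx => (hgM x).not_gt (hMs.trans hx)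
  simp [hempty]

/-- Layer-cake formula: both integrals are integrals over `(0, M]` of the measures of the
superlevel sets `{g > s}`, whose masses differ by at most `tvDist μ ν / 2`. -/
lemma two_mul_integral_sub_integral_le [IsProbabilityMeasure μ] [IsProbabilityMeasure ν]
    {g : α → ℝ} (hg : Measurable g) {M : ℝ} (hg0 : ∀ x, 0 ≤ g x) (hgM : ∀ x, g x ≤ M) :
    2 * (∫ x, g x ∂μ - ∫ x, g x ∂ν) ≤ M * tvDist μ ν := by
  have hM : 0 ≤ M := (hg0 (nonempty_of_isProbabilityMeasure μ).some).trans (hgM _)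
  have hlevel : ∀ ρ : Measure α, IsProbabilityMeasure ρ →
      IntegrableOn (fun s => (ρ {x | s < g x}).toReal) (Set.Ioc 0 M) := fun ρ _ => by
    have hanti : Antitone fun s => (ρ {x | s < g x}).toReal := fun s s' hss' =>
      ENNReal.toReal_mono (measure_ne_top ρ _) (measure_mono fun x hx => hss'.trans_lt hx)
    exact ((hanti.antitoneOn _).integrableOn_isCompact isCompact_Icc).mono_set
      Set.Ioc_subset_Icc_self
  rw [integral_eq_setIntegral_Ioc_measure_lt hg hg0 hgM,
    integral_eq_setIntegral_Ioc_measure_lt hg hg0 hgM,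
    ← integral_sub (hlevel μ ‹_›) (hlevel ν ‹_›), ← integral_const_mul]
  calc ∫ s in Set.Ioc 0 M, 2 * ((μ {x | s < g x}).toReal - (ν {x | s < g x}).toReal)
      ≤ ∫ _ in Set.Ioc 0 M, tvDist μ ν :=
        setIntegral_mono (((hlevel μ ‹_›).sub (hlevel ν ‹_›)).const_mul 2)
          (integrableOn_const measure_Ioc_lt_top.ne)
          fun s => (mul_le_mul_of_nonneg_left (le_abs_self _) zero_le_two).trans
            (two_mul_abs_measure_sub_le_tvDist (measurableSet_lt measurable_const hg))
    _ = M * tvDist μ ν := by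
      rw [setIntegral_const, Real.volume_real_Ioc_of_le hM, sub_zero, smul_eq_mul]

lemma two_mul_abs_integral_sub_integral_le [IsProbabilityMeasure μ] [IsProbabilityMeasure ν]
    {g : α → ℝ} (hg : Measurable g) {M : ℝ} (hg0 : ∀ x, 0 ≤ g x) (hgM : ∀ x, g x ≤ M) :
    2 * |∫ x, g x ∂μ - ∫ x, g x ∂ν| ≤ M * tvDist μ ν := by
  rcases abs_cases (∫ x, g x ∂μ - ∫ x, g x ∂ν) with ⟨h, -⟩ | ⟨h, -⟩
  · rw [h]; exact two_mul_integral_sub_integral_le hg hg0 hgM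
  · rw [h, neg_sub, tvDist_comm]; exact two_mul_integral_sub_integral_le hg hg0 hgM

/-- Shifting `g` by `M` makes it take values in `[0, 2M]` without changing the difference. -/
lemma abs_integral_sub_integral_le_tvDist [IsProbabilityMeasure μ] [IsProbabilityMeasure ν]
    {g : α → ℝ} (hg : Measurable g) {M : ℝ} (hgM : ∀ x, |g x| ≤ M) :
    |∫ x, g x ∂μ - ∫ x, g x ∂ν| ≤ M * tvDist μ ν := by
  have hint : ∀ ρ : Measure α, IsProbabilityMeasure ρ → Integrable g ρ := fun ρ _ =>
    (integrable_const M).mono' hg.aestronglyMeasurable (.of_forall fun x => hgM x)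
  have hshift : ∀ ρ : Measure α, IsProbabilityMeasure ρ →
      ∫ x, (g x + M) ∂ρ = ∫ x, g x ∂ρ + M := fun ρ _ => by
    rw [integral_add (hint ρ ‹_›) (integrable_const M), integral_const, probReal_univ, one_smul]
  have h := two_mul_abs_integral_sub_integral_le (μ := μ) (ν := ν) (M := 2 * M) (hg.add_const M)
    (fun x => neg_le_iff_add_nonneg.1 (abs_le.1 (hgM x)).1)
    (fun x => by linarith [(abs_le.1 (hgM x)).2])
  rw [hshift μ ‹_›, hshift ν ‹_›, add_sub_add_right_eq_sub] at h
  linarith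

lemma tvDist_comp_le [IsProbabilityMeasure μ] [IsProbabilityMeasure ν] (κ : Kernel α β)
    [IsMarkovKernel κ] : tvDist (κ ∘ₘ μ) (κ ∘ₘ ν) ≤ tvDist μ ν := by
  refine tvDist_le_of_forall fun B hB => ?_
  have hmeas : Measurable fun x => (κ x B).toReal := (κ.measurable_coe hB).ennreal_toReal
  have hrepr : ∀ ρ : Measure α, ((κ ∘ₘ ρ) B).toReal = ∫ x, (κ x B).toReal ∂ρ := fun ρ => by
    rw [Measure.bind_apply hB κ.aemeasurable,
      integral_toReal (κ.measurable_coe hB).aemeasurable (.of_forall fun x => measure_lt_top _ _)]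
  rw [hrepr, hrepr, ← one_mul (tvDist μ ν)]
  exact two_mul_abs_integral_sub_integral_le hmeas (fun _ => ENNReal.toReal_nonneg)
    fun _ => measureReal_le_one

end TotalVariation

section History

@[fun_prop]
lemma Measurable.finSnoc {α : Type*} [MeasurableSpace α] {n : ℕ} {f : α → Fin n → Y}
    {g : α → Y} (hf : Measurable f) (hg : Measurable g) :
    Measurable fun a => (Fin.snoc (f a) (g a) : Fin (n + 1) → Y) := by
  refine measurable_pi_lambda _ fun i => Fin.lastCases ?_ (fun j => ?_) i
  · simpa only [Fin.snoc_last] using hg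
  · simpa only [Fin.snoc_castSucc] using measurable_pi_iff.1 hf j

variable (T : Kernel (X × U) X) (Q : Kernel X Y) [IsMarkovKernel Q]

-- `Fin (0 + 1)` rather than `Fin 1`, so that instance search matches the type of `hist _ _ _ 0`.
noncomputable def histInit : Kernel X (X × (Fin (0 + 1) → Y)) :=
  (Kernel.id ×ₖ Q).map fun q => (q.1, fun _ => q.2)

instance : IsMarkovKernel (histInit Q) := Kernel.IsMarkovKernel.map _ (by fun_prop)

/-- From `(x, y₀, …, y_t)`, draw `x' ~ T(x, γ_t(y₀, …, y_t))` and `y' ~ Q(x')`,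
and append `y'` to the observations. -/
noncomputable def histStep {t : ℕ} (γt : (Fin (t + 1) → Y) → U) (hγt : Measurable γt) :
    Kernel (X × (Fin (t + 1) → Y)) (X × (Fin (t + 2) → Y)) :=
  (Kernel.id ×ₖ ((Kernel.id ×ₖ Q) ∘ₖ T.comap (fun p => (p.1, γt p.2)) (by fun_prop))).map
    fun r => (r.2.1, Fin.snoc r.1.2 r.2.2)

instance [IsMarkovKernel T] {t : ℕ} (γt : (Fin (t + 1) → Y) → U) (hγt : Measurable γt) :
    IsMarkovKernel (histStep T Q γt hγt) :=
  Kernel.IsMarkovKernel.map _ (by fun_prop)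

lemma histStep_apply [IsMarkovKernel T] {t : ℕ} (γt : (Fin (t + 1) → Y) → U)
    (hγt : Measurable γt) (p : X × (Fin (t + 1) → Y)) :
    histStep T Q γt hγt p = (T (p.1, γt p.2) ⊗ₘ Q).map fun q => (q.1, Fin.snoc p.2 q.2) := by
  rw [histStep, Kernel.map_apply _ (by fun_prop), Kernel.prod_apply, Kernel.id_apply,
    Measure.dirac_prod, Measure.map_map (by fun_prop) (by fun_prop), Kernel.comp_apply,
    Kernel.comap_apply, Measure.compProd_eq_comp_prod]
  rfl

lemma hist_zero_eq_comp (γ : (t : ℕ) → (Fin (t + 1) → Y) → U) (P : Measure X) [SFinite P] :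
    hist T Q γ 0 P = histInit Q ∘ₘ P := by
  rw [hist, Measure.compProd_eq_comp_prod, Measure.map_comp _ _ (by fun_prop), histInit]

lemma hist_succ_eq_comp [IsMarkovKernel T] (γ : (t : ℕ) → (Fin (t + 1) → Y) → U)
    (P : Measure X) (t : ℕ) (hγt : Measurable (γ t)) :
    hist T Q γ (t + 1) P = histStep T Q (γ t) hγt ∘ₘ hist T Q γ t P := by
  rw [hist]
  congr 1
  funext p
  rw [histStep_apply]

lemma isProbabilityMeasure_hist [IsMarkovKernel T] (γ : Pol Y U) (P : Measure X)
    [IsProbabilityMeasure P] :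
    ∀ t, IsProbabilityMeasure (hist T Q γ.1 t P)
  | 0 => by rw [hist_zero_eq_comp]; infer_instance
  | t + 1 => by
    have := isProbabilityMeasure_hist γ P t
    rw [hist_succ_eq_comp T Q γ.1 P t (γ.2 t)]
    infer_instance

lemma tvDist_hist_le [IsMarkovKernel T] (γ : Pol Y U) (μ ν : Measure X) [IsProbabilityMeasure μ]
    [IsProbabilityMeasure ν] : ∀ t, tvDist (hist T Q γ.1 t μ) (hist T Q γ.1 t ν) ≤ tvDist μ ν
  | 0 => by simp only [hist_zero_eq_comp]; exact tvDist_comp_le _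
  | t + 1 => by
    have := isProbabilityMeasure_hist T Q γ μ t
    have := isProbabilityMeasure_hist T Q γ ν t
    simp only [hist_succ_eq_comp T Q γ.1 _ t (γ.2 t)]
    exact (tvDist_comp_le _).trans (tvDist_hist_le γ μ ν t)

end History

lemma abs_tsum_geometric_mul_le {β C : ℝ} (hβ0 : 0 ≤ β) (hβ1 : β < 1) {a : ℕ → ℝ}
    (ha : ∀ t, |a t| ≤ C) : |∑' t, β ^ t * a t| ≤ C / (1 - β) := by
  rw [div_eq_inv_mul]
  refine tsum_of_norm_bounded (f := fun t => β ^ t * a t)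
    ((hasSum_geometric_of_lt_one hβ0 hβ1).mul_right C) fun t => ?_
  rw [Real.norm_eq_abs, abs_mul, abs_of_nonneg (pow_nonneg hβ0 t)]
  exact mul_le_mul_of_nonneg_left (ha t) (pow_nonneg hβ0 t)

lemma summable_geometric_mul_of_abs_le {β C : ℝ} (hβ0 : 0 ≤ β) (hβ1 : β < 1) {a : ℕ → ℝ}
    (ha : ∀ t, |a t| ≤ C) : Summable fun t => β ^ t * a t := by
  refine ((summable_geometric_of_lt_one hβ0 hβ1).mul_right C).of_norm_bounded fun t => ?_
  rw [Real.norm_eq_abs, abs_mul, abs_of_nonneg (pow_nonneg hβ0 t)]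
  exact mul_le_mul_of_nonneg_left (ha t) (pow_nonneg hβ0 t)

lemma abs_ciInf_sub_ciInf_le {ι : Type*} [Nonempty ι] {f g : ι → ℝ} {C : ℝ}
    (hf : BddBelow (Set.range f)) (hfg : ∀ i, |f i - g i| ≤ C) :
    |(⨅ i, f i) - ⨅ i, g i| ≤ C := by
  obtain ⟨b, hb⟩ := hf
  have hg : BddBelow (Set.range g) := ⟨b - C, by
    rintro _ ⟨i, rfl⟩
    linarith [hb ⟨i, rfl⟩, (abs_le.1 (hfg i)).2]⟩
  have hfg_le : (⨅ i, f i) - C ≤ ⨅ i, g i :=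
    le_ciInf fun i => by linarith [ciInf_le ⟨b, hb⟩ i, (abs_le.1 (hfg i)).2]
  have hgf_le : (⨅ i, g i) - C ≤ ⨅ i, f i :=
    le_ciInf fun i => by linarith [ciInf_le hg i, (abs_le.1 (hfg i)).1]
  exact abs_sub_le_iff.2 ⟨by linarith, by linarith⟩

section Cost

variable {β : ℝ} {c : X → U → ℝ} {M : ℝ} (T : Kernel (X × U) X) [IsMarkovKernel T]
  (Q : Kernel X Y) [IsMarkovKernel Q]

lemma abs_integral_cost_le (hcM : ∀ x u, |c x u| ≤ M) (γ : Pol Y U) (ρ : Measure X)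
    [IsProbabilityMeasure ρ] (t : ℕ) : |∫ p, c p.1 (γ.1 t p.2) ∂(hist T Q γ.1 t ρ)| ≤ M := by
  have := isProbabilityMeasure_hist T Q γ ρ t
  simpa using norm_integral_le_of_norm_le_const (μ := hist T Q γ.1 t ρ)
    (.of_forall fun p : X × (Fin (t + 1) → Y) =>
      (Real.norm_eq_abs _).trans_le (hcM p.1 (γ.1 t p.2)))

lemma abs_Jbeta_le (hβ0 : 0 ≤ β) (hβ1 : β < 1) (hcM : ∀ x u, |c x u| ≤ M) (γ : Pol Y U)
    (ρ : Measure X) [IsProbabilityMeasure ρ] : |Jbeta β c T Q ρ γ.1| ≤ M / (1 - β) :=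
  abs_tsum_geometric_mul_le hβ0 hβ1 (abs_integral_cost_le T Q hcM γ ρ)

lemma abs_Jbeta_sub_Jbeta_le (hβ0 : 0 ≤ β) (hβ1 : β < 1) (hc : Measurable (Function.uncurry c))
    (hcM : ∀ x u, |c x u| ≤ M) (γ : Pol Y U) (μ ν : Measure X) [IsProbabilityMeasure μ]
    [IsProbabilityMeasure ν] :
    |Jbeta β c T Q μ γ.1 - Jbeta β c T Q ν γ.1| ≤ M * tvDist μ ν / (1 - β) := by
  have hstage : ∀ t, |∫ p, c p.1 (γ.1 t p.2) ∂(hist T Q γ.1 t μ) -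
      ∫ p, c p.1 (γ.1 t p.2) ∂(hist T Q γ.1 t ν)| ≤ M * tvDist μ ν := fun t => by
    have := isProbabilityMeasure_hist T Q γ μ t
    have := isProbabilityMeasure_hist T Q γ ν t
    have hγt := γ.2 t
    have hM : 0 ≤ M := (abs_nonneg _).trans (abs_integral_cost_le T Q hcM γ μ t)
    have hcost : Measurable fun p : X × (Fin (t + 1) → Y) => c p.1 (γ.1 t p.2) :=
      hc.comp (f := fun p : X × (Fin (t + 1) → Y) => (p.1, γ.1 t p.2)) (by fun_prop)
    exact (abs_integral_sub_integral_le_tvDist hcost fun p => hcM _ _).trans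
      (mul_le_mul_of_nonneg_left (tvDist_hist_le T Q γ μ ν t) hM)
  rw [Jbeta, Jbeta, ← (summable_geometric_mul_of_abs_le hβ0 hβ1
    (abs_integral_cost_le T Q hcM γ μ)).tsum_sub
    (summable_geometric_mul_of_abs_le hβ0 hβ1 (abs_integral_cost_le T Q hcM γ ν))]
  simp only [← mul_sub]
  exact abs_tsum_geometric_mul_le hβ0 hβ1 hstage

end Cost

theorem discounted_robustness_tv_bound_general
    (β : ℝ) (hβ0 : 0 < β) (hβ1 : β < 1)
    (c : X → U → ℝ) (hc : Measurable (Function.uncurry c))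
    (M : ℝ) (hcM : ∀ x u, |c x u| ≤ M)
    (T : Kernel (X × U) X) [IsMarkovKernel T]
    (Q : Kernel X Y) [IsMarkovKernel Q]
    (P Pn : Measure X) [IsProbabilityMeasure P] [IsProbabilityMeasure Pn]
    (γn : Pol Y U) (hγn : Jbeta β c T Q Pn γn.1 = Jstar β c T Q Pn) :
    |Jbeta β c T Q P γn.1 - Jstar β c T Q P| ≤ 2 * tvDist Pn P * M / (1 - β) := by
  have : Nonempty (Pol Y U) := ⟨γn⟩
  have hpolicy : |Jbeta β c T Q P γn.1 - Jbeta β c T Q Pn γn.1| ≤ M * tvDist Pn P / (1 - β) :=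
    tvDist_comm P Pn ▸ abs_Jbeta_sub_Jbeta_le T Q hβ0.le hβ1 hc hcM γn P Pn
  have hvalue : |Jstar β c T Q Pn - Jstar β c T Q P| ≤ M * tvDist Pn P / (1 - β) := by
    unfold Jstar
    exact abs_ciInf_sub_ciInf_le
      ⟨-(M / (1 - β)), by
        rintro _ ⟨γ, rfl⟩
        exact neg_le_of_abs_le (abs_Jbeta_le T Q hβ0.le hβ1 hcM γ Pn)⟩
      fun γ => abs_Jbeta_sub_Jbeta_le T Q hβ0.le hβ1 hc hcM γ Pn P
  calc |Jbeta β c T Q P γn.1 - Jstar β c T Q P|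
      ≤ |Jbeta β c T Q P γn.1 - Jbeta β c T Q Pn γn.1|
          + |Jstar β c T Q Pn - Jstar β c T Q P| := by
        rw [← hγn]; exact abs_sub_le _ _ _
    _ ≤ M * tvDist Pn P / (1 - β) + M * tvDist Pn P / (1 - β) := add_le_add hpolicy hvalue
    _ = 2 * tvDist Pn P * M / (1 - β) := by ring

/-- Robustness of the discounted POMDP to an incorrect prior: if `γ_{P_n}*` is an optimal
policy designed for the incorrect prior `P_n`, then applying it to the true prior `P` incurs
a loss of at most `2 ‖P_n − P‖_TV ‖c‖_∞ / (1−β)`. -/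
theorem discounted_robustness_tv_bound [Nonempty U]
    (β : ℝ) (hβ0 : 0 < β) (hβ1 : β < 1)
    (c : X → U → ℝ) (hc : Measurable (Function.uncurry c))
    (hc0 : ∀ x u, 0 ≤ c x u) (M : ℝ) (hcM : ∀ x u, |c x u| ≤ M)
    (T : Kernel (X × U) X) [IsMarkovKernel T]
    (Q : Kernel X Y) [IsMarkovKernel Q]
    (P Pn : Measure X) [IsProbabilityMeasure P] [IsProbabilityMeasure Pn]
    (γn : Pol Y U) (hγn : Jbeta β c T Q Pn γn.1 = Jstar β c T Q Pn) :
    |Jbeta β c T Q P γn.1 - Jstar β c T Q P| ≤ 2 * tvDist Pn P * M / (1 - β) :=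
  discounted_robustness_tv_bound_general β hβ0 hβ1 c hc M hcM T Q P Pn γn hγn

end Stmt17
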